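/- arXiv:2207.08275 — 4 statements merged into one kernel-verified Lean document; each statement's English description precedes it below -/
import Mathlib

section
/- Let λ > 0, c ∈ ℝ^k, and Q ∈ ℝ^{k×k} symmetric positive semidefinite. A point x in the probability simplex Δ ⊆ ℝ^k minimizes y ↦ (c + ½Qy)ᵀ y + λ yᵀ ln(y) over Δ if and only if x = softmax(−(c + Qx)/λ), where softmax(z) = exp(z)/(1ᵀ exp(z)). -/
open Finset

def simplex (k : ℕ) : Set (Fin k → ℝ) :=
  {y | ∑ i, y i = 1 ∧ ∀ i, 0 ≤ y i}

noncomputable def softmax {k : ℕ} (z : Fin k → ℝ) : Fin k → ℝ :=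
  fun i => Real.exp (z i) / ∑ j, Real.exp (z j)

/-- The entropy-regularized quadratic objective `(c + ½Qy)ᵀy + λ yᵀ ln y`. -/
noncomputable def obj {k : ℕ} (c : Fin k → ℝ) (Q : Matrix (Fin k) (Fin k) ℝ)
    (lam : ℝ) (y : Fin k → ℝ) : ℝ :=
  (∑ i, (c i + (1 / 2) * Q.mulVec y i) * y i) + lam * ∑ i, y i * Real.log (y i)

/-!
Write `s = softmax (-(c + Q x) / λ)` and `KL(y ‖ s) = ∑ yᵢ (log yᵢ - log sᵢ)`. Since `log s`
differs from `-(c + Q x) / λ` by a constant, which pairs to zero with `y - x` when `∑ y = ∑ x`,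
the objective satisfies `f y - f x = ½ (y - x)ᵀ Q (y - x) + λ (KL(y ‖ s) - KL(x ‖ s))`.
If `x = s`, the right side is nonnegative by Gibbs' inequality. If `x ≠ s`, then `KL(x ‖ s) > 0`;
along the segment from `x` to `s` the term `KL(· ‖ s)` decreases at least linearly (it is convex
and vanishes at `s`), while the quadratic term grows only quadratically, so a short step lowers `f`.
-/

open Real Matrix InformationTheory

section RelEntropy

variable {ι : Type*} [Fintype ι]

noncomputable def relEntropy (y s : ι → ℝ) : ℝ :=
  ∑ i, (y i * log (y i) - y i * log (s i))

lemma mul_klFun_div {s : ℝ} (hs : s ≠ 0) (y : ℝ) :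
    s * klFun (y / s) = y * log y - y * log s + s - y := by
  rcases eq_or_ne y 0 with rfl | hy
  · simp [klFun_apply]
  · rw [klFun_apply, log_div hy hs]
    field_simp

lemma relEntropy_eq_sum_mul_klFun {y s : ι → ℝ} (hs : ∀ i, s i ≠ 0)
    (hsum : ∑ i, y i = ∑ i, s i) : relEntropy y s = ∑ i, s i * klFun (y i / s i) := by
  simp only [relEntropy, mul_klFun_div (hs _), add_sub_assoc, sum_add_distrib, sum_sub_distrib,
    hsum, sub_self, add_zero]

lemma relEntropy_self (s : ι → ℝ) : relEntropy s s = 0 := by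
  simp [relEntropy]

lemma relEntropy_nonneg {y s : ι → ℝ} (hy : ∀ i, 0 ≤ y i) (hs : ∀ i, 0 < s i)
    (hsum : ∑ i, y i = ∑ i, s i) : 0 ≤ relEntropy y s := by
  rw [relEntropy_eq_sum_mul_klFun (fun i => (hs i).ne') hsum]
  exact sum_nonneg fun i _ => mul_nonneg (hs i).le (klFun_nonneg (div_nonneg (hy i) (hs i).le))

lemma relEntropy_pos {y s : ι → ℝ} (hy : ∀ i, 0 ≤ y i) (hs : ∀ i, 0 < s i)
    (hsum : ∑ i, y i = ∑ i, s i) (hne : y ≠ s) : 0 < relEntropy y s := by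
  refine (relEntropy_nonneg hy hs hsum).lt_of_ne' fun h => hne (funext fun i => ?_)
  rw [relEntropy_eq_sum_mul_klFun (fun i => (hs i).ne') hsum,
    sum_eq_zero_iff_of_nonneg fun i _ =>
      mul_nonneg (hs i).le (klFun_nonneg (div_nonneg (hy i) (hs i).le))] at h
  have := (mul_eq_zero.mp (h i (mem_univ i))).resolve_left (hs i).ne'
  rw [klFun_eq_zero_iff (div_nonneg (hy i) (hs i).le), div_eq_one_iff_eq (hs i).ne'] at this
  exact this

lemma convexOn_relEntropy (s : ι → ℝ) : ConvexOn ℝ (Set.Ici 0) (relEntropy · s) := by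
  refine ⟨convex_Ici 0, fun x hx y hy a b ha hb hab => ?_⟩
  simp only [relEntropy, smul_eq_mul, mul_sum, ← sum_add_distrib]
  refine sum_le_sum fun i _ => ?_
  have := convexOn_mul_log.2 (hx i) (hy i) ha hb hab
  simp only [Pi.add_apply, Pi.smul_apply, smul_eq_mul] at this ⊢
  linear_combination this

end RelEntropy

lemma Matrix.IsSymm.dotProduct_mulVec_comm {ι R : Type*} [Fintype ι] [CommSemiring R]
    {Q : Matrix ι ι R} (hQ : Q.IsSymm) (x y : ι → R) : x ⬝ᵥ Q *ᵥ y = y ⬝ᵥ Q *ᵥ x := by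
  rw [dotProduct_mulVec, ← mulVec_transpose, hQ.eq, dotProduct_comm]

lemma Matrix.IsSymm.dotProduct_mulVec_self_eq {ι R : Type*} [Fintype ι] [CommRing R]
    {Q : Matrix ι ι R} (hQ : Q.IsSymm) (x y : ι → R) :
    y ⬝ᵥ Q *ᵥ y = x ⬝ᵥ Q *ᵥ x + 2 * (Q *ᵥ x ⬝ᵥ (y - x)) + (y - x) ⬝ᵥ Q *ᵥ (y - x) := by
  simp only [mulVec_sub, dotProduct_sub, sub_dotProduct, hQ.dotProduct_mulVec_comm y x,
    dotProduct_comm (Q *ᵥ x)]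
  ring

lemma Matrix.PosSemidef.isSymm {ι : Type*} [Fintype ι] {Q : Matrix ι ι ℝ} (hQ : Q.PosSemidef) :
    Q.IsSymm :=
  isHermitian_iff_isSymm.mp hQ.isHermitian

lemma Matrix.PosSemidef.dotProduct_mulVec_self_nonneg {ι : Type*} [Fintype ι] {Q : Matrix ι ι ℝ}
    (hQ : Q.PosSemidef) (v : ι → ℝ) : 0 ≤ v ⬝ᵥ Q *ᵥ v := by
  simpa using hQ.dotProduct_mulVec_nonneg v

lemma convex_simplex (k : ℕ) : Convex ℝ (simplex k) := by
  convert convex_stdSimplex ℝ (Fin k) using 1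
  exact Set.ext fun _ => And.comm

lemma exists_mem_Icc_sq_mul_sub_mul_neg {a b : ℝ} (ha : 0 < a) (hb : 0 ≤ b) :
    ∃ t ∈ Set.Icc (0 : ℝ) 1, t ^ 2 * b - t * a < 0 := by
  have hab : 0 < a + b := by linarith
  refine ⟨a / (a + b), ⟨by positivity, (div_le_one hab).mpr (by linarith)⟩, ?_⟩
  field_simp
  nlinarith [mul_pos ha ha, mul_pos (mul_pos ha ha) hab]

lemma softmax_pos {k : ℕ} (z : Fin k → ℝ) (i : Fin k) : 0 < softmax z i :=
  div_pos (exp_pos _) (sum_pos (fun _ _ => exp_pos _) ⟨i, mem_univ i⟩)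

lemma log_softmax {k : ℕ} (z : Fin k → ℝ) (i : Fin k) :
    log (softmax z i) = z i - log (∑ j, exp (z j)) := by
  rw [softmax, log_div (exp_pos _).ne' (sum_pos (fun _ _ => exp_pos _) ⟨i, mem_univ i⟩).ne',
    log_exp]

lemma softmax_mem_simplex {k : ℕ} [Nonempty (Fin k)] (z : Fin k → ℝ) : softmax z ∈ simplex k :=
  ⟨by simp only [softmax, ← sum_div, div_self (sum_pos (fun _ _ => exp_pos _) univ_nonempty).ne'],
    fun i => (softmax_pos z i).le⟩

section Objective

variable {k : ℕ} (c : Fin k → ℝ) (Q : Matrix (Fin k) (Fin k) ℝ) (lam : ℝ)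

lemma obj_eq (y : Fin k → ℝ) :
    obj c Q lam y = c ⬝ᵥ y + 1 / 2 * (y ⬝ᵥ Q *ᵥ y) + lam * ∑ i, y i * log (y i) := by
  simp only [obj, dotProduct, add_mul, sum_add_distrib, mul_sum]
  congr 2
  exact sum_congr rfl fun i _ => by ring

lemma dotProduct_eq_neg_mul_log_softmax {g v : Fin k → ℝ} (hlam : lam ≠ 0) (hv : ∑ i, v i = 0) :
    g ⬝ᵥ v = -lam * ∑ i, v i * log (softmax (fun i => -g i / lam) i) := by
  simp only [log_softmax, mul_sub, sum_sub_distrib, ← sum_mul, hv, zero_mul, sub_zero, dotProduct]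
  rw [mul_sum]
  refine sum_congr rfl fun i _ => ?_
  field_simp

variable {c Q lam}

lemma obj_sub_obj (hQ : Q.IsSymm) (hlam : lam ≠ 0) {x y : Fin k → ℝ}
    (hsum : ∑ i, y i = ∑ i, x i) :
    obj c Q lam y - obj c Q lam x = 1 / 2 * ((y - x) ⬝ᵥ Q *ᵥ (y - x)) +
      lam * (relEntropy y (softmax fun i => -(c i + (Q *ᵥ x) i) / lam) -
        relEntropy x (softmax fun i => -(c i + (Q *ᵥ x) i) / lam)) := by
  set s := softmax fun i => -(c i + (Q *ᵥ x) i) / lam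
  have hgrad : (c + Q *ᵥ x) ⬝ᵥ (y - x) = -lam * ∑ i, (y - x) i * log (s i) :=
    dotProduct_eq_neg_mul_log_softmax lam hlam (by simp [sum_sub_distrib, hsum])
  have hrel : relEntropy y s - relEntropy x s =
      ∑ i, y i * log (y i) - ∑ i, x i * log (x i) - ∑ i, (y - x) i * log (s i) := by
    simp only [relEntropy, Pi.sub_apply, sub_mul, sum_sub_distrib]
    ring
  rw [obj_eq, obj_eq, hQ.dotProduct_mulVec_self_eq x y, hrel]
  simp only [add_dotProduct, dotProduct_sub] at hgrad ⊢
  linear_combination hgrad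

end Objective

section Optimality

variable {k : ℕ} {c : Fin k → ℝ} {Q : Matrix (Fin k) (Fin k) ℝ} {lam : ℝ}

lemma obj_le_obj_of_eq_softmax (hQ : Q.PosSemidef) (hlam : 0 < lam) {x y : Fin k → ℝ}
    (hx : x ∈ simplex k) (hfix : x = softmax fun i => -(c i + (Q *ᵥ x) i) / lam)
    (hy : y ∈ simplex k) : obj c Q lam x ≤ obj c Q lam y := by
  have hdiff := obj_sub_obj (c := c) hQ.isSymm hlam.ne' (hy.1.trans hx.1.symm)
  rw [← hfix, relEntropy_self, sub_zero] at hdiff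
  have hxpos : ∀ i, 0 < x i := fun i => by rw [hfix]; exact softmax_pos _ i
  have hD := relEntropy_nonneg hy.2 hxpos (hy.1.trans hx.1.symm)
  linarith [hQ.dotProduct_mulVec_self_nonneg (y - x), mul_nonneg hlam.le hD]

lemma exists_obj_lt_of_ne_softmax (hQ : Q.PosSemidef) (hlam : 0 < lam) {x : Fin k → ℝ}
    (hx : x ∈ simplex k) (hne : x ≠ softmax fun i => -(c i + (Q *ᵥ x) i) / lam) :
    ∃ y ∈ simplex k, obj c Q lam y < obj c Q lam x := by
  have : Nonempty (Fin k) := univ_nonempty_iff.mp (nonempty_of_sum_ne_zero (hx.1 ▸ one_ne_zero))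
  set s := softmax fun i => -(c i + (Q *ᵥ x) i) / lam
  have hs : s ∈ simplex k := softmax_mem_simplex _
  have hD : 0 < relEntropy x s := relEntropy_pos hx.2 (softmax_pos _) (hx.1.trans hs.1.symm) hne
  obtain ⟨t, ⟨ht0, ht1⟩, hneg⟩ := exists_mem_Icc_sq_mul_sub_mul_neg (mul_pos hlam hD)
    (mul_nonneg one_half_pos.le (hQ.dotProduct_mulVec_self_nonneg (s - x)))
  set y := (1 - t) • x + t • s
  have hy : y ∈ simplex k := convex_simplex k hx hs (by linarith) ht0 (by ring)
  have hconv : relEntropy y s ≤ (1 - t) * relEntropy x s := by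
    simpa [relEntropy_self] using
      (convexOn_relEntropy s).2 hx.2 hs.2 (by linarith : 0 ≤ 1 - t) ht0 (by ring)
  have hyx : y - x = t • (s - x) := by
    simp only [y, sub_smul, one_smul, smul_sub]
    abel
  have hdiff := obj_sub_obj (c := c) hQ.isSymm hlam.ne' (hy.1.trans hx.1.symm)
  rw [hyx, mulVec_smul, dotProduct_smul, smul_dotProduct, smul_eq_mul, smul_eq_mul] at hdiff
  refine ⟨y, hy, ?_⟩
  linarith [mul_le_mul_of_nonneg_left hconv hlam.le]

end Optimality

/-- `x ∈ Δ` minimizes `y ↦ (c + ½Qy)ᵀy + λ yᵀ ln y` over `Δ`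
iff `x = softmax(-(c + Qx)/λ)`. -/
theorem stmt1 {k : ℕ} (c : Fin k → ℝ) (Q : Matrix (Fin k) (Fin k) ℝ)
    (hQ : Q.PosSemidef) (lam : ℝ) (hlam : 0 < lam)
    (x : Fin k → ℝ) (hx : x ∈ simplex k) :
    (∀ y ∈ simplex k, obj c Q lam x ≤ obj c Q lam y) ↔
      x = softmax (fun i => -(c i + Q.mulVec x i) / lam) := by
  refine ⟨fun hmin => ?_, fun hfix y hy => obj_le_obj_of_eq_softmax hQ hlam hx hfix hy⟩
  by_contra hne
  obtain ⟨y, hy, hlt⟩ := exists_obj_lt_of_ne_softmax hQ hlam hx hne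
  exact (hmin y hy).not_gt hlt
end

section
/- Under the same assumptions (λ > 0, C + Cᵀ ⪰ 0, C_{ii} = C_{ii}ᵀ), the quantal response equilibrium is unique: there is exactly one x ∈ ℝ^m_{>0} with each block x_i ∈ Δ_i satisfying x_i = softmax(−(b_i + Σ_j C_{ij} x_j)/λ) for all i ∈ [n]. -/
open Matrix Finset

/-!
Uniqueness: for two equilibria `x` and `v`, the vector `λ (log v - log x) + C (v - x)` is constant
on every block, so it is orthogonal to `v - x`, whose block sums vanish. Since `C` is monotone and
`log` is strongly monotone with modulus one on `(0, 1]`, this forces `v = x`.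

Existence: equilibria are the interior solutions of the variational inequality
`⟨b + C x + λ ∇negEntropy x, y - x⟩ ≥ 0` on the product of simplices, i.e. the fixed points of the
forward-backward map `x ↦ prox_{γλ negEntropy} (x - γ (b + C x))`. The entropy is strongly convex
on the unit cube, so the proximal step contracts by `1 + γλ`, while by monotonicity of `C` the
forward step expands by at most `√(1 + γ² ‖C‖²)`; for small `γ` the map is a contraction, and a
minimiser of `‖x - T x‖²` over the compact product of simplices is its fixed point. The infinite
slope of the entropy at the boundary keeps proximal points interior.
-/

namespace LogitQRE

open Real Filter Topology

section Entropy

variable {α : Type*} [Fintype α]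

noncomputable def negEntropy (x : α → ℝ) : ℝ := ∑ p, x p * log (x p)

lemma continuous_negEntropy : Continuous (negEntropy (α := α)) :=
  continuous_finsetSum _ fun p _ => continuous_mul_log.comp (continuous_apply p)

lemma hasFDerivAt_sum_apply {f : α → ℝ → ℝ} {g x : α → ℝ}
    (hf : ∀ p, HasDerivAt (f p) (g p) (x p)) :
    HasFDerivAt (fun y => ∑ p, f p (y p))
      (∑ p, g p • ContinuousLinearMap.proj p : (α → ℝ) →L[ℝ] ℝ) x :=
  HasFDerivAt.fun_sum fun p _ => (hf p).comp_hasFDerivAt x (hasFDerivAt_apply p x)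

lemma mul_log_segment_sub_le {a c t : ℝ} (ha : 0 ≤ a) (hc : 0 ≤ c) (ht₀ : 0 ≤ t) (ht₁ : t ≤ 1) :
    (a + t * (c - a)) * log (a + t * (c - a)) - a * log a ≤ t * (c * log c - a * log a) := by
  have h := convexOn_mul_log.2 (Set.mem_Ici.2 ha) (Set.mem_Ici.2 hc) (sub_nonneg.2 ht₁) ht₀
    (sub_add_cancel 1 t)
  simp only [smul_eq_mul] at h
  rw [show (1 - t) * a + t * c = a + t * (c - a) by ring] at h
  linarith

/-- The infinite slope of the entropy at the boundary of the orthant. -/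
lemma exists_negEntropy_segment_lt {x c : α → ℝ} (hx : ∀ p, 0 ≤ x p) (hc : ∀ p, 0 ≤ c p)
    {p₀ : α} (hx₀ : x p₀ = 0) (hc₀ : 0 < c p₀) {μ : ℝ} (hμ : 0 < μ) (A : ℝ) :
    ∃ t ∈ Set.Ioc (0 : ℝ) 1, t * A + μ * (negEntropy (x + t • (c - x)) - negEntropy x) < 0 := by
  classical
  set B := negEntropy c - negEntropy x
  have hdiff : ∀ t ∈ Set.Ioc (0 : ℝ) 1,
      negEntropy (x + t • (c - x)) - negEntropy x ≤ t * B + t * c p₀ * log t := by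
    intro t ⟨ht₀, ht₁⟩
    -- convexity of `s ↦ s log s` in every coordinate, and the exact value `t c log (t c)` at `p₀`
    have hp : ∀ p, (x p + t * (c p - x p)) * log (x p + t * (c p - x p)) - x p * log (x p) ≤
        t * (c p * log (c p) - x p * log (x p)) + if p = p₀ then t * c p₀ * log t else 0 := by
      intro p
      split_ifs with h
      · subst h
        rw [hx₀, zero_add, sub_zero, log_mul ht₀.ne' hc₀.ne']
        linarith
      · linarith [mul_log_segment_sub_le (hx p) (hc p) ht₀.le ht₁]
    have := sum_le_sum fun p (_ : p ∈ univ) => hp p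
    simp only [sum_add_distrib, sum_ite_eq', mem_univ, if_true, ← mul_sum, sum_sub_distrib] at this
    simpa [negEntropy, B, sum_sub_distrib] using this
  have hlog : Tendsto (fun t => A + μ * B + μ * c p₀ * log t) (𝓝[>] 0) atBot :=
    tendsto_atBot_add_const_left _ _ (tendsto_log_nhdsGT_zero.const_mul_atBot (by positivity))
  obtain ⟨t, ht, hneg⟩ :=
    ((eventually_mem_set.2 (Ioc_mem_nhdsGT zero_lt_one)).and (hlog.eventually_lt_atBot 0)).exists
  exact ⟨t, ht, by nlinarith [hdiff t ht, ht.1]⟩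

lemma sub_le_log_sub {a b : ℝ} (ha : 0 < a) (hab : a ≤ b) (hb : b ≤ 1) : b - a ≤ log b - log a := by
  have hb₀ : 0 < b := ha.trans_le hab
  have h := one_sub_inv_le_log_of_pos (div_pos hb₀ ha)
  rw [inv_div, log_div hb₀.ne' ha.ne'] at h
  have : b - a ≤ 1 - a / b := by
    rw [one_sub_div hb₀.ne', le_div_iff₀ hb₀]
    nlinarith
  linarith

lemma sq_sub_le_mul_log_sub {a b : ℝ} (ha : 0 < a) (ha₁ : a ≤ 1) (hb : 0 < b) (hb₁ : b ≤ 1) :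
    (a - b) ^ 2 ≤ (a - b) * (log a - log b) := by
  rcases le_total a b with hab | hba
  · nlinarith [sub_le_log_sub ha hab hb₁]
  · nlinarith [sub_le_log_sub hb hba ha₁]

end Entropy

section Prox

variable {α : Type*} [Fintype α] {K : Set (α → ℝ)} {μ : ℝ} {w x : α → ℝ}

/-- Minimising this over `K` computes the Euclidean proximal point of `μ • negEntropy` (restricted
to `K`) at `w`. -/
noncomputable def proxObjective (μ : ℝ) (w y : α → ℝ) : ℝ :=
  μ * negEntropy y + ∑ p, (y p - w p) ^ 2 / 2

noncomputable def proxGradient (μ : ℝ) (w x : α → ℝ) : α → ℝ :=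
  fun p => μ * (log (x p) + 1) + (x p - w p)

lemma continuous_proxObjective (μ : ℝ) (w : α → ℝ) : Continuous (proxObjective μ w) := by
  unfold proxObjective
  have := continuous_negEntropy (α := α)
  fun_prop

lemma hasFDerivAt_proxObjective (hx : ∀ p, 0 < x p) :
    HasFDerivAt (proxObjective μ w)
      (∑ p, proxGradient μ w x p • ContinuousLinearMap.proj p : (α → ℝ) →L[ℝ] ℝ) x := by
  have hsep : proxObjective μ w = fun y => ∑ p, (μ * (y p * log (y p)) + (y p - w p) ^ 2 / 2) := by
    funext y
    simp only [proxObjective, negEntropy, mul_sum, sum_add_distrib]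
  rw [hsep]
  refine hasFDerivAt_sum_apply (f := fun p s => μ * (s * log s) + (s - w p) ^ 2 / 2) fun p => ?_
  have hq : HasDerivAt (fun s => (s - w p) ^ 2 / 2) (x p - w p) (x p) := by
    simpa using (((hasDerivAt_id (x p)).sub_const (w p)).pow 2).div_const 2
  exact ((hasDerivAt_mul_log (hx p).ne').const_mul μ).add hq

lemma pos_of_isMinOn_proxObjective (hK : Convex ℝ K) (hK₀ : ∀ y ∈ K, ∀ p, 0 ≤ y p) {c : α → ℝ}
    (hc : c ∈ K) (hc₀ : ∀ p, 0 < c p) (hμ : 0 < μ) (hx : x ∈ K)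
    (hmin : IsMinOn (proxObjective μ w) K x) (p : α) : 0 < x p := by
  by_contra! hp
  obtain ⟨t, ht, hlt⟩ := exists_negEntropy_segment_lt (hK₀ x hx) (hK₀ c hc)
    (le_antisymm hp (hK₀ x hx p)) (hc₀ p) hμ (∑ q, ((c q - w q) ^ 2 - (x q - w q) ^ 2) / 2)
  have hle : proxObjective μ w x ≤ proxObjective μ w (x + t • (c - x)) :=
    hmin (hK.add_smul_sub_mem hx hc ⟨ht.1.le, ht.2⟩)
  -- the quadratic part is convex, so it grows at most linearly along the segment
  have hquad : ∀ q, (x q + t * (c q - x q) - w q) ^ 2 / 2 - (x q - w q) ^ 2 / 2 ≤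
      t * (((c q - w q) ^ 2 - (x q - w q) ^ 2) / 2) := fun q => by
    nlinarith [mul_nonneg (mul_nonneg ht.1.le (sub_nonneg.2 ht.2)) (sq_nonneg (c q - x q))]
  have := sum_le_sum fun q (_ : q ∈ univ) => hquad q
  rw [sum_sub_distrib, ← mul_sum] at this
  simp only [proxObjective, Pi.add_apply, Pi.smul_apply, Pi.sub_apply, smul_eq_mul] at hle
  linarith

lemma proxGradient_dotProduct_sub_nonneg (hK : Convex ℝ K) (hx : x ∈ K) (hpos : ∀ p, 0 < x p)
    (hmin : IsMinOn (proxObjective μ w) K x) {y : α → ℝ} (hy : y ∈ K) :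
    0 ≤ proxGradient μ w x ⬝ᵥ (y - x) := by
  simpa [dotProduct] using hmin.localize.hasFDerivWithinAt_nonneg
    (hasFDerivAt_proxObjective hpos).hasFDerivWithinAt
    (sub_mem_posTangentConeAt_of_segment_subset (hK.segment_subset hx hy))

/-- The optimality conditions characterising the proximal point `u` of `μ • negEntropy`
(restricted to `K`) at `w`. -/
def IsEntropicProx (K : Set (α → ℝ)) (μ : ℝ) (w u : α → ℝ) : Prop :=
  u ∈ K ∧ (∀ p, 0 < u p) ∧ ∀ y ∈ K, 0 ≤ proxGradient μ w u ⬝ᵥ (y - u)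

lemma exists_isEntropicProx (hK : Convex ℝ K) (hKc : IsCompact K) (hK₀ : ∀ y ∈ K, ∀ p, 0 ≤ y p)
    {c : α → ℝ} (hc : c ∈ K) (hc₀ : ∀ p, 0 < c p) (hμ : 0 < μ) (w : α → ℝ) :
    ∃ u, IsEntropicProx K μ w u := by
  obtain ⟨u, hu, hmin⟩ := hKc.exists_isMinOn ⟨c, hc⟩ (continuous_proxObjective μ w).continuousOn
  have hpos := pos_of_isMinOn_proxObjective hK hK₀ hc hc₀ hμ hu hmin
  exact ⟨u, hu, hpos, fun y hy => proxGradient_dotProduct_sub_nonneg hK hu hpos hmin hy⟩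

/-- The entropy is strongly convex on the unit cube, so there the proximal map contracts by
`1 + μ`. -/
lemma IsEntropicProx.sum_sq_sub_le (hK₁ : ∀ y ∈ K, ∀ p, y p ≤ 1) (hμ : 0 ≤ μ) {u u' w' : α → ℝ}
    (hu : IsEntropicProx K μ w u) (hu' : IsEntropicProx K μ w' u') :
    (1 + μ) ^ 2 * ∑ p, (u p - u' p) ^ 2 ≤ ∑ p, (w p - w' p) ^ 2 := by
  have hlog : ∑ p, (u p - u' p) ^ 2 ≤ ∑ p, (u p - u' p) * (log (u p) - log (u' p)) :=
    sum_le_sum fun p _ => sq_sub_le_mul_log_sub (hu.2.1 p) (hK₁ u hu.1 p) (hu'.2.1 p)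
      (hK₁ u' hu'.1 p)
  have hsum : 0 ≤ ∑ p, (w p - w' p) * (u p - u' p) - ∑ p, (u p - u' p) ^ 2 -
      μ * ∑ p, (u p - u' p) * (log (u p) - log (u' p)) := by
    have := add_nonneg (hu.2.2 u' hu'.1) (hu'.2.2 u hu.1)
    simp only [dotProduct, proxGradient, Pi.sub_apply, ← sum_add_distrib] at this
    rw [mul_sum, ← sum_sub_distrib, ← sum_sub_distrib]
    exact this.trans_eq (sum_congr rfl fun p _ => by ring)
  have hcs := sum_mul_sq_le_sq_mul_sq univ (fun p => w p - w' p) (fun p => u p - u' p)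
  have hd : 0 ≤ ∑ p, (u p - u' p) ^ 2 := sum_nonneg fun p _ => sq_nonneg _
  have he : 0 ≤ ∑ p, (w p - w' p) ^ 2 := sum_nonneg fun p _ => sq_nonneg _
  have h1 : (1 + μ) * ∑ p, (u p - u' p) ^ 2 ≤ ∑ p, (w p - w' p) * (u p - u' p) := by
    nlinarith [mul_le_mul_of_nonneg_left hlog hμ]
  rcases hd.eq_or_lt with h0 | hpos
  · rw [← h0, mul_zero]
    exact he
  refine le_of_mul_le_mul_right ?_ hpos
  nlinarith [mul_le_mul h1 h1 (by positivity) ((mul_nonneg (by linarith) hd).trans h1)]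

end Prox

section FixedPoint

variable {α : Type*} [Fintype α]

lemma continuousOn_of_sum_sq_sub_le {s : Set (α → ℝ)} {f : (α → ℝ) → α → ℝ} {κ : ℝ}
    (hf : ∀ x ∈ s, ∀ y ∈ s, ∑ p, (f x p - f y p) ^ 2 ≤ κ * ∑ p, (x p - y p) ^ 2) :
    ContinuousOn f s := by
  intro x₀ hx₀
  refine tendsto_pi_nhds.2 fun p => ?_
  have hdist : Tendsto (fun x => κ * ∑ q, (x q - x₀ q) ^ 2) (𝓝[s] x₀) (𝓝 0) := by
    have : Continuous fun x : α → ℝ => κ * ∑ q, (x q - x₀ q) ^ 2 := by fun_prop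
    simpa using (this.tendsto x₀).mono_left nhdsWithin_le_nhds
  have hsq : Tendsto (fun x => (f x p - f x₀ p) ^ 2) (𝓝[s] x₀) (𝓝 0) :=
    squeeze_zero' (Eventually.of_forall fun _ => sq_nonneg _)
      (eventually_nhdsWithin_of_forall fun x hx =>
        (single_le_sum (fun q _ => sq_nonneg (f x q - f x₀ q)) (mem_univ p)).trans
          (hf x hx x₀ hx₀)) hdist
  have habs := hsq.sqrt
  simp only [sqrt_sq_eq_abs, sqrt_zero] at habs
  exact tendsto_sub_nhds_zero_iff.1 ((tendsto_zero_iff_abs_tendsto_zero _).2 habs)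

/-- The fixed point is a minimiser of `x ↦ ‖x - T x‖²` over `K`. -/
lemma exists_fixedPoint_of_sum_sq_sub_le {K : Set (α → ℝ)} (hK : IsCompact K) (hne : K.Nonempty)
    {T : (α → ℝ) → α → ℝ} (hT : Set.MapsTo T K K) {κ : ℝ} (hκ : κ < 1)
    (hc : ∀ x ∈ K, ∀ y ∈ K, ∑ p, (T x p - T y p) ^ 2 ≤ κ * ∑ p, (x p - y p) ^ 2) :
    ∃ z ∈ K, T z = z := by
  have hTc := continuousOn_of_sum_sq_sub_le hc
  obtain ⟨z, hz, hmin⟩ := hK.exists_isMinOn hne (f := fun x => ∑ p, (x p - T x p) ^ 2)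
    (continuousOn_finsetSum _ fun p _ =>
      ((continuous_apply p).continuousOn.sub ((continuous_apply p).comp_continuousOn hTc)).pow 2)
  have h1 : ∑ p, (z p - T z p) ^ 2 ≤ κ * ∑ p, (z p - T z p) ^ 2 :=
    (hmin (hT hz)).trans (hc z hz (T z) (hT hz))
  have h0 : ∑ p, (z p - T z p) ^ 2 = 0 := by
    have := sum_nonneg fun p (_ : p ∈ univ) => sq_nonneg (z p - T z p)
    nlinarith
  refine ⟨z, hz, funext fun p => ?_⟩
  have := (sum_eq_zero_iff_of_nonneg fun q _ => sq_nonneg (z q - T z q)).1 h0 p (mem_univ p)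
  linarith [pow_eq_zero_iff (n := 2) two_ne_zero |>.1 this]

end FixedPoint

section Monotone

variable {α : Type*} [Fintype α]

lemma dotProduct_mulVec_nonneg_of_posSemidef_add_transpose {C : Matrix α α ℝ}
    (hC : (C + Cᵀ).PosSemidef) (d : α → ℝ) : 0 ≤ d ⬝ᵥ C *ᵥ d := by
  have := hC.dotProduct_mulVec_nonneg d
  rw [star_trivial, add_mulVec, dotProduct_add, dotProduct_transpose_mulVec] at this
  linarith

lemma sum_mulVec_sq_le (C : Matrix α α ℝ) (d : α → ℝ) :
    ∑ p, (C *ᵥ d) p ^ 2 ≤ (∑ p, ∑ q, C p q ^ 2) * ∑ q, d q ^ 2 := by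
  rw [sum_mul]
  exact sum_le_sum fun p _ => sum_mul_sq_le_sq_mul_sq univ (C p) d

lemma sum_sq_sub_smul_mulVec_le {C : Matrix α α ℝ} (hC : (C + Cᵀ).PosSemidef) {γ : ℝ}
    (hγ : 0 ≤ γ) (d : α → ℝ) :
    ∑ p, (d p - γ * (C *ᵥ d) p) ^ 2 ≤ (1 + γ ^ 2 * ∑ p, ∑ q, C p q ^ 2) * ∑ p, d p ^ 2 := by
  have hmono := dotProduct_mulVec_nonneg_of_posSemidef_add_transpose hC d
  have hexp : ∑ p, (d p - γ * (C *ᵥ d) p) ^ 2 =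
      ∑ p, d p ^ 2 - 2 * γ * (d ⬝ᵥ C *ᵥ d) + γ ^ 2 * ∑ p, (C *ᵥ d) p ^ 2 := by
    simp only [dotProduct, mul_sum, ← sum_sub_distrib, ← sum_add_distrib]
    exact sum_congr rfl fun p _ => by ring
  rw [hexp]
  nlinarith [mul_le_mul_of_nonneg_left (sum_mulVec_sq_le C d) (sq_nonneg γ),
    mul_nonneg hγ hmono]

end Monotone

section ForwardBackward

variable {α : Type*} [Fintype α] {K : Set (α → ℝ)} {b : α → ℝ} {C : Matrix α α ℝ} {γ lam : ℝ}

lemma IsEntropicProx.sum_sq_forward_sub_le (hK₁ : ∀ y ∈ K, ∀ p, y p ≤ 1)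
    (hC : (C + Cᵀ).PosSemidef) (hγ : 0 ≤ γ) (hlam : 0 ≤ lam) {x y u v : α → ℝ}
    (hu : IsEntropicProx K (lam * γ) (x - γ • (b + C *ᵥ x)) u)
    (hv : IsEntropicProx K (lam * γ) (y - γ • (b + C *ᵥ y)) v) :
    (1 + lam * γ) ^ 2 * ∑ p, (u p - v p) ^ 2 ≤
      (1 + γ ^ 2 * ∑ p, ∑ q, C p q ^ 2) * ∑ p, (x p - y p) ^ 2 := by
  have hprox := hu.sum_sq_sub_le hK₁ (by positivity) hv
  have hsub : ∀ p, (x - γ • (b + C *ᵥ x)) p - (y - γ • (b + C *ᵥ y)) p =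
      (x - y) p - γ * (C *ᵥ (x - y)) p := fun p => by
    simp only [mulVec_sub, Pi.sub_apply, Pi.smul_apply, Pi.add_apply, smul_eq_mul]
    ring
  simp only [hsub] at hprox
  simpa only [Pi.sub_apply] using hprox.trans (sum_sq_sub_smul_mulVec_le hC hγ (x - y))

lemma IsEntropicProx.dotProduct_sub_nonneg_of_forward_self (hγ : 0 < γ) {z : α → ℝ}
    (hz : IsEntropicProx K (lam * γ) (z - γ • (b + C *ᵥ z)) z) {y : α → ℝ} (hy : y ∈ K) :
    0 ≤ (fun p => (b + C *ᵥ z) p + lam * (log (z p) + 1)) ⬝ᵥ (y - z) := by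
  have h := hz.2.2 y hy
  have hscale : proxGradient (lam * γ) (z - γ • (b + C *ᵥ z)) z =
      γ • fun p => (b + C *ᵥ z) p + lam * (log (z p) + 1) := by
    funext p
    simp only [proxGradient, Pi.sub_apply, Pi.smul_apply, smul_eq_mul]
    ring
  rw [hscale, smul_dotProduct, smul_eq_mul] at h
  exact nonneg_of_mul_nonneg_right h hγ

theorem exists_pos_forall_dotProduct_sub_nonneg (hK : Convex ℝ K) (hKc : IsCompact K)
    (hK₀₁ : ∀ y ∈ K, ∀ p, 0 ≤ y p ∧ y p ≤ 1) {c : α → ℝ} (hc : c ∈ K) (hc₀ : ∀ p, 0 < c p)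
    (hC : (C + Cᵀ).PosSemidef) (hlam : 0 < lam) :
    ∃ x ∈ K, (∀ p, 0 < x p) ∧
      ∀ y ∈ K, 0 ≤ (fun p => (b + C *ᵥ x) p + lam * (log (x p) + 1)) ⬝ᵥ (y - x) := by
  set L := ∑ p, ∑ q, C p q ^ 2
  have hL : 0 ≤ L := sum_nonneg fun p _ => sum_nonneg fun q _ => sq_nonneg _
  -- any step `γ < 2 λ / L` makes the forward-backward map a contraction
  set γ := lam / (L + 1)
  have hγ : 0 < γ := by positivity
  have hκ : (1 + γ ^ 2 * L) / (1 + lam * γ) ^ 2 < 1 := by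
    have hγL : γ * (L + 1) = lam := div_mul_cancel₀ _ (by positivity)
    have : lam * γ = γ ^ 2 * (L + 1) := by rw [← hγL]; ring
    rw [div_lt_one (by positivity), this]
    nlinarith [pow_pos hγ 2, sq_nonneg (γ ^ 2 * (L + 1))]
  choose T hT using exists_isEntropicProx hK hKc (fun y hy p => (hK₀₁ y hy p).1) hc hc₀
    (mul_pos hlam hγ)
  have hK₁ : ∀ y ∈ K, ∀ p, y p ≤ 1 := fun y hy p => (hK₀₁ y hy p).2
  obtain ⟨z, hz, hfix⟩ := exists_fixedPoint_of_sum_sq_sub_le hKc ⟨c, hc⟩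
    (fun x _ => (hT (x - γ • (b + C *ᵥ x))).1) hκ fun x _ y _ => by
      rw [div_mul_eq_mul_div, le_div_iff₀ (by positivity), mul_comm]
      exact (hT _).sum_sq_forward_sub_le hK₁ hC hγ.le hlam.le (hT _)
  have hzprox := hT (z - γ • (b + C *ᵥ z))
  rw [hfix] at hzprox
  exact ⟨z, hz, hzprox.2.1, fun y hy => hzprox.dotProduct_sub_nonneg_of_forward_self hγ hy⟩

end ForwardBackward

section Blocks

variable {ι : Type*} {κ : ι → Type*} [∀ i, Fintype (κ i)]

def blockSimplex (κ : ι → Type*) [∀ i, Fintype (κ i)] : Set ((Σ i, κ i) → ℝ) :=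
  {x | ∀ i, x ∘ Sigma.mk i ∈ stdSimplex ℝ (κ i)}

lemma convex_blockSimplex : Convex ℝ (blockSimplex κ) :=
  fun _ hx _ hy _ _ ha hb hab i => convex_stdSimplex ℝ (κ i) (hx i) (hy i) ha hb hab

lemma mem_Icc_of_mem_blockSimplex {x : (Σ i, κ i) → ℝ} (hx : x ∈ blockSimplex κ) (p : Σ i, κ i) :
    x p ∈ Set.Icc 0 1 :=
  mem_Icc_of_mem_stdSimplex (hx p.1) p.2

lemma isCompact_blockSimplex : IsCompact (blockSimplex κ) := by
  refine (isCompact_univ_pi fun _ => isCompact_Icc).of_isClosed_subset ?_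
    fun x hx => Set.mem_univ_pi.2 (mem_Icc_of_mem_blockSimplex hx)
  rw [blockSimplex, Set.ofPred_forall]
  exact isClosed_iInter fun i => (isClosed_stdSimplex ℝ (κ i)).preimage
    (continuous_pi fun a => continuous_apply (⟨i, a⟩ : Σ i, κ i))

lemma barycenter_mem_blockSimplex [∀ i, Nonempty (κ i)] :
    (fun p => (Fintype.card (κ p.1) : ℝ)⁻¹) ∈ blockSimplex κ :=
  fun i => (stdSimplex.barycenter (X := κ i) (𝕜 := ℝ)).2

variable [Fintype ι]

lemma sum_mul_fst_of_mem_blockSimplex {x : (Σ i, κ i) → ℝ} (hx : x ∈ blockSimplex κ)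
    (r : ι → ℝ) : ∑ p, x p * r p.1 = ∑ i, r i := by
  rw [Fintype.sum_sigma]
  refine sum_congr rfl fun i _ => ?_
  have h : ∑ a, x ⟨i, a⟩ = 1 := (hx i).2
  simp only [← sum_mul, h, one_mul]

/-- Compare `x` with the vertex that picks a minimal coordinate of `g` in every block. -/
lemma exists_eq_fst_of_forall_dotProduct_sub_nonneg [∀ i, Nonempty (κ i)]
    {x g : (Σ i, κ i) → ℝ} (hx : x ∈ blockSimplex κ) (hpos : ∀ p, 0 < x p)
    (hg : ∀ y ∈ blockSimplex κ, 0 ≤ g ⬝ᵥ (y - x)) : ∃ ρ : ι → ℝ, ∀ p, g p = ρ p.1 := by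
  classical
  choose a ha using fun i => Finite.exists_min fun b : κ i => g ⟨i, b⟩
  refine ⟨fun i => g ⟨i, a i⟩, ?_⟩
  set y : (Σ i, κ i) → ℝ := fun p => if p.2 = a p.1 then 1 else 0
  have hy : y ∈ blockSimplex κ := fun i => by
    simpa [y, Function.comp_def, eq_comm] using ite_eq_mem_stdSimplex ℝ (a i)
  have hgy : g ⬝ᵥ y = ∑ p, x p * g ⟨p.1, a p.1⟩ := by
    rw [sum_mul_fst_of_mem_blockSimplex hx fun i => g ⟨i, a i⟩, dotProduct, Fintype.sum_sigma]
    simp [y]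
  have hterm : ∀ p, x p * (g ⟨p.1, a p.1⟩ - g p) ≤ 0 := fun p =>
    mul_nonpos_of_nonneg_of_nonpos (hpos p).le (sub_nonpos.2 (ha p.1 p.2))
  have hsum : ∑ p, x p * (g ⟨p.1, a p.1⟩ - g p) = 0 := by
    refine le_antisymm (sum_nonpos fun p _ => hterm p) ?_
    have := hg y hy
    rw [dotProduct_sub, hgy, dotProduct_comm] at this
    simpa [dotProduct, mul_sub] using this
  intro p
  have := (sum_eq_zero_iff_of_nonpos fun q _ => hterm q).1 hsum p (mem_univ p)
  linarith [(mul_eq_zero.1 this).resolve_left (hpos p).ne']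

/-- The log-linear form of the quantal response equilibrium condition
`x_i = softmax (-(b_i + (C x)_i) / lam)`, with `ρ i` absorbing the normalising constant of block
`i`. -/
def IsLogitEquilibrium (b : (Σ i, κ i) → ℝ) (C : Matrix (Σ i, κ i) (Σ i, κ i) ℝ) (lam : ℝ)
    (x : (Σ i, κ i) → ℝ) : Prop :=
  x ∈ blockSimplex κ ∧ (∀ p, 0 < x p) ∧
    ∃ ρ : ι → ℝ, ∀ p, lam * log (x p) + (b + C *ᵥ x) p = ρ p.1

theorem exists_isLogitEquilibrium [∀ i, Nonempty (κ i)] (b : (Σ i, κ i) → ℝ)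
    {C : Matrix (Σ i, κ i) (Σ i, κ i) ℝ} (hC : (C + Cᵀ).PosSemidef) {lam : ℝ} (hlam : 0 < lam) :
    ∃ x, IsLogitEquilibrium b C lam x := by
  obtain ⟨x, hx, hpos, hvi⟩ := exists_pos_forall_dotProduct_sub_nonneg convex_blockSimplex
    isCompact_blockSimplex (fun y hy => mem_Icc_of_mem_blockSimplex hy)
    barycenter_mem_blockSimplex (fun p => by positivity) (b := b) hC hlam
  obtain ⟨ρ, hρ⟩ := exists_eq_fst_of_forall_dotProduct_sub_nonneg hx hpos hvi
  exact ⟨x, hx, hpos, fun i => ρ i - lam, fun p => by linarith [hρ p]⟩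

theorem IsLogitEquilibrium.unique {b : (Σ i, κ i) → ℝ} {C : Matrix (Σ i, κ i) (Σ i, κ i) ℝ}
    (hC : (C + Cᵀ).PosSemidef) {lam : ℝ} (hlam : 0 < lam) {x v : (Σ i, κ i) → ℝ}
    (hx : IsLogitEquilibrium b C lam x) (hv : IsLogitEquilibrium b C lam v) : v = x := by
  obtain ⟨hxK, hxpos, ρ, hρ⟩ := hx
  obtain ⟨hvK, hvpos, σ, hσ⟩ := hv
  have hlog : ∑ p, (v p - x p) ^ 2 ≤ ∑ p, (v p - x p) * (log (v p) - log (x p)) :=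
    sum_le_sum fun p _ => sq_sub_le_mul_log_sub (hvpos p)
      (mem_Icc_of_mem_blockSimplex hvK p).2 (hxpos p) (mem_Icc_of_mem_blockSimplex hxK p).2
  have hmono := dotProduct_mulVec_nonneg_of_posSemidef_add_transpose hC (v - x)
  have hρσ : lam * ∑ p, (v p - x p) * (log (v p) - log (x p)) + (v - x) ⬝ᵥ C *ᵥ (v - x) =
      ∑ p, (v p * σ p.1 - v p * ρ p.1) - ∑ p, (x p * σ p.1 - x p * ρ p.1) := by
    rw [mulVec_sub, dotProduct, mul_sum, ← sum_add_distrib, ← sum_sub_distrib]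
    refine sum_congr rfl fun p _ => ?_
    rw [← hρ p, ← hσ p]
    simp only [Pi.add_apply, Pi.sub_apply]
    ring
  simp only [sum_sub_distrib, sum_mul_fst_of_mem_blockSimplex hvK,
    sum_mul_fst_of_mem_blockSimplex hxK, sub_self] at hρσ
  have hzero : ∑ p, (v p - x p) ^ 2 = 0 :=
    le_antisymm (by nlinarith) (sum_nonneg fun p _ => sq_nonneg _)
  funext p
  have := (sum_eq_zero_iff_of_nonneg fun q _ => sq_nonneg (v q - x q)).1 hzero p (mem_univ p)
  linarith [pow_eq_zero_iff (n := 2) two_ne_zero |>.1 this]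

end Blocks

lemma eq_softmax_iff {k : ℕ} {x z : Fin k → ℝ} (hsum : ∑ a, x a = 1) (hpos : ∀ a, 0 < x a) :
    x = softmax z ↔ ∃ r, ∀ a, log (x a) = z a + r := by
  constructor
  · rintro rfl
    refine ⟨-log (∑ j, exp (z j)), fun a => ?_⟩
    have hS : 0 < ∑ j, exp (z j) := sum_pos (fun j _ => exp_pos _) ⟨a, mem_univ a⟩
    rw [softmax, log_div (exp_pos _).ne' hS.ne', log_exp, sub_eq_add_neg]
  · rintro ⟨r, hr⟩
    have hx : ∀ a, x a = exp r * exp (z a) := fun a => by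
      rw [← exp_add, add_comm, ← hr, exp_log (hpos a)]
    have hS : exp r * ∑ j, exp (z j) = 1 := by
      rw [mul_sum, ← hsum]
      exact sum_congr rfl fun a _ => (hx a).symm
    funext a
    rw [softmax, hx a, eq_div_iff (right_ne_zero_of_mul_eq_one hS), mul_assoc,
      mul_comm (exp (z a)), ← mul_assoc, hS, one_mul]

lemma softmax_fixedPoint_iff_isLogitEquilibrium {n : ℕ} {m : Fin n → ℕ}
    (b : (Σ i, Fin (m i)) → ℝ) (C : Matrix (Σ i, Fin (m i)) (Σ i, Fin (m i)) ℝ) {lam : ℝ}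
    (hlam : 0 < lam) (x : (Σ i, Fin (m i)) → ℝ) :
    ((∀ p, 0 < x p) ∧ ∀ i, (fun a => x ⟨i, a⟩) ∈ simplex (m i) ∧
        (fun a => x ⟨i, a⟩) = softmax (fun a => -(b ⟨i, a⟩ + C.mulVec x ⟨i, a⟩) / lam)) ↔
      IsLogitEquilibrium b C lam x := by
  constructor
  · rintro ⟨hpos, h⟩
    choose r hr using fun i => (eq_softmax_iff (h i).1.1 fun a => hpos _).1 (h i).2
    refine ⟨fun i => ⟨(h i).1.2, (h i).1.1⟩, hpos, fun i => lam * r i, fun ⟨i, a⟩ => ?_⟩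
    rw [hr i a, Pi.add_apply]
    field_simp
    ring
  · rintro ⟨hK, hpos, ρ, hρ⟩
    refine ⟨hpos, fun i => ⟨⟨(hK i).2, (hK i).1⟩, (eq_softmax_iff (hK i).2 fun a => hpos _).2
      ⟨ρ i / lam, fun a => ?_⟩⟩⟩
    have := hρ ⟨i, a⟩
    rw [Pi.add_apply] at this
    rw [Function.comp_apply]
    field_simp
    linarith

end LogitQRE

theorem stmt4_general {n : ℕ} {m : Fin n → ℕ} (hm : ∀ i, 0 < m i)
    (b : ((i : Fin n) × Fin (m i)) → ℝ)
    (C : Matrix ((i : Fin n) × Fin (m i)) ((i : Fin n) × Fin (m i)) ℝ)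
    (lam : ℝ) (hlam : 0 < lam)
    (hC : (C + Cᵀ).PosSemidef) :
    ∃! x : ((i : Fin n) × Fin (m i)) → ℝ,
      (∀ p, 0 < x p) ∧
      ∀ i : Fin n,
        (fun a => x ⟨i, a⟩) ∈ simplex (m i) ∧
        (fun a => x ⟨i, a⟩) =
          softmax (fun a => -(b ⟨i, a⟩ + C.mulVec x ⟨i, a⟩) / lam) := by
  have : ∀ i, Nonempty (Fin (m i)) := fun i => Fin.pos_iff_nonempty.1 (hm i)
  obtain ⟨x, hx⟩ := LogitQRE.exists_isLogitEquilibrium b hC hlam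
  refine ⟨x, (LogitQRE.softmax_fixedPoint_iff_isLogitEquilibrium b C hlam x).2 hx, fun v hv => ?_⟩
  exact hx.unique hC hlam ((LogitQRE.softmax_fixedPoint_iff_isLogitEquilibrium b C hlam v).1 hv)

/-- uniqueness of the quantal response equilibrium.  Under `λ > 0`,
`C + Cᵀ ⪰ 0`, and symmetry of the diagonal blocks, there is exactly one strictly
positive `x` with blocks in the simplices satisfying
`x_i = softmax(-(b_i + Σ_j C_{ij} x_j)/λ)` for all `i`. -/
theorem stmt4 {n : ℕ} {m : Fin n → ℕ} (hm : ∀ i, 0 < m i)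
    (b : ((i : Fin n) × Fin (m i)) → ℝ)
    (C : Matrix ((i : Fin n) × Fin (m i)) ((i : Fin n) × Fin (m i)) ℝ)
    (lam : ℝ) (hlam : 0 < lam)
    (hC : (C + Cᵀ).PosSemidef)
    (hCii : ∀ i : Fin n, ∀ a b : Fin (m i), C ⟨i, a⟩ ⟨i, b⟩ = C ⟨i, b⟩ ⟨i, a⟩) :
    ∃! x : ((i : Fin n) × Fin (m i)) → ℝ,
      (∀ p, 0 < x p) ∧
      ∀ i : Fin n,
        (fun a => x ⟨i, a⟩) ∈ simplex (m i) ∧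
        (fun a => x ⟨i, a⟩) =
          softmax (fun a => -(b ⟨i, a⟩ + C.mulVec x ⟨i, a⟩) / lam) :=
  stmt4_general hm b C lam hlam hC
end

section
/- Implicit differentiation of the equilibrium map: let f : ℝ^m → ℝ^m be continuously differentiable, λ > 0, and define F(x, C) = x − f(−(1/λ)(b + Cx)) for C ∈ ℝ^{m×m}. If x satisfies F(x, C) = 0 and the matrix I_m + (1/λ) ∂f(u) C is nonsingular, where u = −(1/λ)(b + Cx), then locally x is a continuously differentiable function of C, and for any continuously differentiable ψ : ℝ^m → ℝ, the gradient of ψ(x(C)) with respect to C is ∇_C ψ = −(1/λ) ∂f(u)ᵀ (I_m + (1/λ)∂f(u)C)^{−ᵀ} ∇_x ψ(x) xᵀ. -/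
/-!
The equilibrium is a zero of `F(C, x) = x - f(-(1/λ)(b + C x))`, whose partial derivatives
at `(C₀, x₀)` are `∂ₓF = I + (1/λ) J C₀` and `∂_C F (c) = (1/λ) J c x₀`, where `J = ∂f(u₀)`. The
implicit function theorem gives a `C¹` local solution `g` with `Dg = -(∂ₓF)⁻¹ ∂_C F`, i.e.
`Dg (c) = K c x₀` with `K = -(1/λ)(I + (1/λ) J C₀)⁻¹ J`. The elementary matrix `E_pq` sends `x₀` to
`x₀_q e_p`, so the chain rule gives `∂ψ(g C)/∂C_pq = (Kᵀ ∇ψ(x₀))_p x₀_q`.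
-/

open Matrix

namespace Matrix

variable {ι : Type*} [Fintype ι] [DecidableEq ι]

/-- The matrix is taken as a plain function `ι → ι → ℝ`, since `Matrix` carries no norm. -/
noncomputable def mulVecCLM : (ι → ι → ℝ) →L[ℝ] (ι → ℝ) →L[ℝ] (ι → ℝ) :=
  LinearMap.toContinuousLinearMap
    ((ofLinearEquiv ℝ).trans (toLin'.trans LinearMap.toContinuousLinearMap)).toLinearMap

theorem mulVecCLM_apply (C : ι → ι → ℝ) (x : ι → ℝ) : mulVecCLM C x = of C *ᵥ x := rfl

theorem isBoundedBilinearMap_mulVecCLM :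
    IsBoundedBilinearMap ℝ fun p : (ι → ι → ℝ) × (ι → ℝ) => mulVecCLM p.1 p.2 :=
  (mulVecCLM (ι := ι)).isBoundedBilinearMap

noncomputable def toCLM' (M : Matrix ι ι ℝ) : (ι → ℝ) →L[ℝ] (ι → ℝ) :=
  LinearMap.toContinuousLinearMap (toLin' M)

theorem toCLM'_apply (M : Matrix ι ι ℝ) (v : ι → ℝ) : toCLM' M v = M *ᵥ v := rfl

theorem toCLM'_comp_toCLM'_nonsing_inv {M : Matrix ι ι ℝ} (hM : IsUnit M) :
    toCLM' M ∘L toCLM' M⁻¹ = .id ℝ _ := by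
  ext1 v
  simp [toCLM'_apply, mul_nonsing_inv M ((isUnit_iff_isUnit_det M).mp hM)]

theorem toCLM'_nonsing_inv_comp_toCLM' {M : Matrix ι ι ℝ} (hM : IsUnit M) :
    toCLM' M⁻¹ ∘L toCLM' M = .id ℝ _ := by
  ext1 v
  simp [toCLM'_apply, nonsing_inv_mul M ((isUnit_iff_isUnit_det M).mp hM)]

theorem isInvertible_toCLM' {M : Matrix ι ι ℝ} (hM : IsUnit M) : (toCLM' M).IsInvertible :=
  .of_inverse (toCLM'_comp_toCLM'_nonsing_inv hM) (toCLM'_nonsing_inv_comp_toCLM' hM)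

theorem inverse_toCLM' {M : Matrix ι ι ℝ} (hM : IsUnit M) : (toCLM' M).inverse = toCLM' M⁻¹ :=
  ContinuousLinearMap.inverse_eq (toCLM'_comp_toCLM'_nonsing_inv hM)
    (toCLM'_nonsing_inv_comp_toCLM' hM)

theorem of_single_single_mulVec (p q : ι) (x : ι → ℝ) :
    of (Pi.single p (Pi.single q 1)) *ᵥ x = x q • Pi.single p 1 := by
  ext i
  by_cases hip : i = p <;> simp [mulVec, dotProduct, Pi.single_apply, hip]

end Matrix

theorem ContinuousLinearMap.apply_mulVec_single {ι : Type*} [Fintype ι] [DecidableEq ι]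
    (L : (ι → ℝ) →L[ℝ] ℝ) (A : Matrix ι ι ℝ) (p : ι) :
    L (A *ᵥ Pi.single p 1) = (Aᵀ *ᵥ fun a => L (Pi.single a 1)) p := by
  rw [mulVec_single_one, pi_eq_sum_univ' (A.col p), map_sum]
  simp [mulVec, dotProduct]

section Equilibrium

variable {ι : Type*} [Fintype ι] [DecidableEq ι] (f : (ι → ℝ) → ι → ℝ) (b : ι → ℝ) (lam : ℝ)

noncomputable def equilibriumResidual (p : (ι → ι → ℝ) × (ι → ℝ)) : ι → ℝ :=
  p.2 - f (-(lam⁻¹) • (b + mulVecCLM p.1 p.2))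

variable {f}

theorem contDiff_equilibriumResidual {n : WithTop ℕ∞} (hf : ContDiff ℝ n f) :
    ContDiff ℝ n (equilibriumResidual f b lam) :=
  contDiff_snd.sub <| hf.comp <|
    (contDiff_const.add isBoundedBilinearMap_mulVecCLM.contDiff).const_smul _

theorem hasFDerivAt_equilibriumResidual {C₀ : ι → ι → ℝ} {x₀ : ι → ℝ}
    (hf : DifferentiableAt ℝ f (-(lam⁻¹) • (b + of C₀ *ᵥ x₀))) :
    HasFDerivAt (equilibriumResidual f b lam)
      (.snd ℝ _ _ - fderiv ℝ f (-(lam⁻¹) • (b + of C₀ *ᵥ x₀)) ∘L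
        ((-(lam⁻¹)) • isBoundedBilinearMap_mulVecCLM.deriv (C₀, x₀))) (C₀, x₀) :=
  hasFDerivAt_snd.sub <| hf.hasFDerivAt.comp (C₀, x₀) <|
    ((isBoundedBilinearMap_mulVecCLM.hasFDerivAt (C₀, x₀)).const_add b).const_smul (-(lam⁻¹))

theorem fderiv_equilibriumResidual_comp_inr {C₀ : ι → ι → ℝ} {x₀ : ι → ℝ}
    (hf : DifferentiableAt ℝ f (-(lam⁻¹) • (b + of C₀ *ᵥ x₀))) :
    fderiv ℝ (equilibriumResidual f b lam) (C₀, x₀) ∘L .inr ℝ _ _ =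
      toCLM' (1 + lam⁻¹ • (LinearMap.toMatrix' (fderiv ℝ f (-(lam⁻¹) • (b + of C₀ *ᵥ x₀)) :
        (ι → ℝ) →ₗ[ℝ] ι → ℝ) * of C₀)) := by
  ext1 v
  rw [(hasFDerivAt_equilibriumResidual b lam hf).fderiv]
  simp [toCLM'_apply, mulVecCLM_apply, add_mulVec, smul_mulVec, ← mulVec_mulVec, sub_eq_add_neg]

theorem fderiv_equilibriumResidual_comp_inl {C₀ : ι → ι → ℝ} {x₀ : ι → ℝ}
    (hf : DifferentiableAt ℝ f (-(lam⁻¹) • (b + of C₀ *ᵥ x₀))) (c : ι → ι → ℝ) :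
    fderiv ℝ (equilibriumResidual f b lam) (C₀, x₀) (c, 0) =
      lam⁻¹ • (LinearMap.toMatrix' (fderiv ℝ f (-(lam⁻¹) • (b + of C₀ *ᵥ x₀)) :
        (ι → ℝ) →ₗ[ℝ] ι → ℝ) *ᵥ (of c *ᵥ x₀)) := by
  rw [(hasFDerivAt_equilibriumResidual b lam hf).fderiv]
  simp [mulVecCLM_apply, - mulVec_mulVec]

open Filter Topology in
theorem exists_equilibriumMap (hf : ContDiff ℝ 1 f) {C₀ : ι → ι → ℝ} {x₀ u₀ : ι → ℝ}
    (hu₀ : u₀ = -(lam⁻¹) • (b + of C₀ *ᵥ x₀)) (hfix : x₀ = f u₀) {J : Matrix ι ι ℝ}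
    (hJ : J = LinearMap.toMatrix' (fderiv ℝ f u₀ : (ι → ℝ) →ₗ[ℝ] ι → ℝ))
    (hinv : IsUnit (1 + lam⁻¹ • (J * of C₀))) :
    ∃ g : (ι → ι → ℝ) → ι → ℝ, ContDiffAt ℝ 1 g C₀ ∧ g C₀ = x₀ ∧
      (∀ᶠ C in 𝓝 C₀, g C = f (-(lam⁻¹) • (b + of C *ᵥ g C))) ∧
      ∀ c, fderiv ℝ g C₀ c = (-(lam⁻¹) • ((1 + lam⁻¹ • (J * of C₀))⁻¹ * J)) *ᵥ (of c *ᵥ x₀) := by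
  subst hu₀ hJ
  have hfd : DifferentiableAt ℝ f (-(lam⁻¹) • (b + of C₀ *ᵥ x₀)) := hf.differentiable one_ne_zero _
  have hΦ : ContDiffAt ℝ 1 (equilibriumResidual f b lam) (C₀, x₀) :=
    (contDiff_equilibriumResidual b lam hf).contDiffAt
  have hinr := fderiv_equilibriumResidual_comp_inr b lam hfd
  have hinvertible := hinr ▸ isInvertible_toCLM' hinv
  have hΦ₀ : equilibriumResidual f b lam (C₀, x₀) = 0 := sub_eq_zero.2 hfix
  refine ⟨hΦ.implicitFunction one_ne_zero hinvertible, hΦ.contDiffAt_implicitFunction _ _,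
    hΦ.implicitFunction_apply_self _ _, ?_, fun c => ?_⟩
  · filter_upwards [hΦ.eventually_apply_implicitFunction one_ne_zero hinvertible] with C hC
    exact sub_eq_zero.1 (hC.trans hΦ₀)
  · rw [(hΦ.hasStrictFDerivAt_implicitFunction one_ne_zero hinvertible).hasFDerivAt.fderiv]
    simp only [ContinuousLinearMap.coe_comp, Function.comp_apply, FunLike.coe_neg, Pi.neg_apply,
      ContinuousLinearMap.inl_apply]
    rw [hinr, inverse_toCLM' hinv, toCLM'_apply,
      fderiv_equilibriumResidual_comp_inl b lam hfd, mulVec_smul, mulVec_mulVec, smul_mulVec]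
    exact (neg_smul _ _).symm

end Equilibrium

theorem fderiv_comp_apply_single_single {ι : Type*} [Fintype ι] [DecidableEq ι]
    {g : (ι → ι → ℝ) → ι → ℝ} {C₀ : ι → ι → ℝ}
    {K : Matrix ι ι ℝ} (hg : DifferentiableAt ℝ g C₀)
    (hK : ∀ c, fderiv ℝ g C₀ c = K *ᵥ (of c *ᵥ g C₀)) {ψ : (ι → ℝ) → ℝ}
    (hψ : DifferentiableAt ℝ ψ (g C₀)) (p q : ι) :
    fderiv ℝ (fun C => ψ (g C)) C₀ (Pi.single p (Pi.single q 1)) =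
      vecMulVec (Kᵀ *ᵥ fun a => fderiv ℝ ψ (g C₀) (Pi.single a 1)) (g C₀) p q := by
  rw [fderiv_fun_comp C₀ hψ hg, ContinuousLinearMap.comp_apply, hK, of_single_single_mulVec,
    mulVec_smul, map_smul, ContinuousLinearMap.apply_mulVec_single, vecMulVec_apply, smul_eq_mul,
    mul_comm]

theorem stmt11_general {m : ℕ} (f : (Fin m → ℝ) → (Fin m → ℝ)) (hf : ContDiff ℝ 1 f)
    (b : Fin m → ℝ) (lam : ℝ)
    (C₀ : Fin m → Fin m → ℝ) (x₀ : Fin m → ℝ)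
    (u₀ : Fin m → ℝ) (hu₀ : u₀ = -(lam⁻¹) • (b + (Matrix.of C₀).mulVec x₀))
    (hfix : x₀ = f u₀)
    (J : Matrix (Fin m) (Fin m) ℝ)
    (hJ : J = LinearMap.toMatrix' (fderiv ℝ f u₀ : (Fin m → ℝ) →ₗ[ℝ] (Fin m → ℝ)))
    (hinv : IsUnit ((1 : Matrix (Fin m) (Fin m) ℝ) + lam⁻¹ • (J * Matrix.of C₀))) :
    ∃ U ∈ nhds C₀, ∃ g : (Fin m → Fin m → ℝ) → (Fin m → ℝ),
      ContDiffOn ℝ 1 g U ∧ g C₀ = x₀ ∧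
      (∀ C ∈ U, g C = f (-(lam⁻¹) • (b + (Matrix.of C).mulVec (g C)))) ∧
      ∀ ψ : (Fin m → ℝ) → ℝ, ContDiff ℝ 1 ψ →
        ∀ p q : Fin m,
          fderiv ℝ (fun C => ψ (g C)) C₀ (Pi.single p (Pi.single q 1)) =
            (-(lam⁻¹)) •
              Matrix.vecMulVec
                ((Jᵀ * (((1 : Matrix (Fin m) (Fin m) ℝ) + lam⁻¹ • (J * Matrix.of C₀))⁻¹)ᵀ).mulVec
                  (fun a => fderiv ℝ ψ x₀ (Pi.single a 1)))
                x₀ p q := by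
  obtain ⟨g, hg, hg₀, hg_fix, hDg⟩ := exists_equilibriumMap b lam hf hu₀ hfix hJ hinv
  obtain ⟨V, hV, hgV⟩ := hg.contDiffOn le_rfl (by simp)
  refine ⟨V ∩ {C | g C = f (-(lam⁻¹) • (b + of C *ᵥ g C))}, Filter.inter_mem hV hg_fix, g,
    hgV.mono Set.inter_subset_left, hg₀, fun C hC => hC.2, fun ψ hψ p q => ?_⟩
  rw [fderiv_comp_apply_single_single (hg.differentiableAt one_ne_zero) (hg₀ ▸ hDg)
    (hψ.differentiable one_ne_zero _), hg₀, transpose_smul, transpose_mul, smul_mulVec,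
    smul_vecMulVec, Matrix.smul_apply]

/-- implicit differentiation of the equilibrium map.  If
`x₀ = f(-(1/λ)(b + C₀ x₀))` and `I + (1/λ) ∂f(u₀) C₀` is nonsingular, then
locally the equilibrium `x` is a `C¹` function `g` of `C`, and for any `C¹`
performance function `ψ`, the matrix of partial derivatives
`∂ψ(g C)/∂C_{pq}` at `C₀` equals
`-(1/λ) ∂f(u₀)ᵀ (I + (1/λ)∂f(u₀)C₀)⁻ᵀ ∇ψ(x₀) x₀ᵀ`. -/
theorem stmt11 {m : ℕ} (f : (Fin m → ℝ) → (Fin m → ℝ)) (hf : ContDiff ℝ 1 f)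
    (b : Fin m → ℝ) (lam : ℝ) (hlam : 0 < lam)
    (C₀ : Fin m → Fin m → ℝ) (x₀ : Fin m → ℝ)
    (u₀ : Fin m → ℝ) (hu₀ : u₀ = -(lam⁻¹) • (b + (Matrix.of C₀).mulVec x₀))
    (hfix : x₀ = f u₀)
    (J : Matrix (Fin m) (Fin m) ℝ)
    (hJ : J = LinearMap.toMatrix' (fderiv ℝ f u₀ : (Fin m → ℝ) →ₗ[ℝ] (Fin m → ℝ)))
    (hinv : IsUnit ((1 : Matrix (Fin m) (Fin m) ℝ) + lam⁻¹ • (J * Matrix.of C₀))) :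
    ∃ U ∈ nhds C₀, ∃ g : (Fin m → Fin m → ℝ) → (Fin m → ℝ),
      ContDiffOn ℝ 1 g U ∧ g C₀ = x₀ ∧
      (∀ C ∈ U, g C = f (-(lam⁻¹) • (b + (Matrix.of C).mulVec (g C)))) ∧
      ∀ ψ : (Fin m → ℝ) → ℝ, ContDiff ℝ 1 ψ →
        ∀ p q : Fin m,
          fderiv ℝ (fun C => ψ (g C)) C₀ (Pi.single p (Pi.single q 1)) =
            (-(lam⁻¹)) •
              Matrix.vecMulVec
                ((Jᵀ * (((1 : Matrix (Fin m) (Fin m) ℝ) + lam⁻¹ • (J * Matrix.of C₀))⁻¹)ᵀ).mulVec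
                  (fun a => fderiv ℝ ψ x₀ (Pi.single a 1)))
                x₀ p q :=
  stmt11_general f hf b lam C₀ x₀ u₀ hu₀ hfix J hJ hinv
end

section
/- Let K ⊆ ℝ^{m×m} be a closed convex cone (under the Frobenius inner product) and B = {M : ‖M‖_F ≤ ρ} with ρ > 0. Then for any C, the orthogonal projection onto K ∩ B equals the composition Π_{K∩B}(C) = Π_B(Π_K(C)), i.e., first project onto the cone and then radially rescale: Π_{K∩B}(C) = (ρ / max{ρ, ‖Π_K(C)‖_F}) · Π_K(C). -/
local notation "⟪" x ", " y "⟫" => @inner ℝ _ _ x y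

/-- projecting onto the intersection of a closed convex cone `K`
and the Frobenius-norm ball of radius `ρ` equals projecting onto `K` and then
radially rescaling.  Here `ℝ^{m×m}` with the Frobenius inner product is modeled
as `EuclideanSpace ℝ (Fin m × Fin m)`. -/
theorem stmt12 {m : ℕ} (K : Set (EuclideanSpace ℝ (Fin m × Fin m)))
    (hKclosed : IsClosed K) (hKconvex : Convex ℝ K)
    (hKcone : ∀ t : ℝ, 0 ≤ t → ∀ x ∈ K, t • x ∈ K)
    (ρ : ℝ) (hρ : 0 < ρ)
    (C PK : EuclideanSpace ℝ (Fin m × Fin m))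
    (hPK : PK ∈ K) (hPKproj : ∀ y ∈ K, ‖PK - C‖ ≤ ‖y - C‖) :
    let P := (ρ / max ρ ‖PK‖) • PK
    (P ∈ K ∧ ‖P‖ ≤ ρ) ∧ ∀ y ∈ K, ‖y‖ ≤ ρ → ‖P - C‖ ≤ ‖y - C‖ := by
  intro P
  have h0K : (0 : EuclideanSpace ℝ (Fin m × Fin m)) ∈ K := by
    simpa using hKcone 0 le_rfl PK hPK
  have hmax : 0 < max ρ ‖PK‖ := lt_max_of_lt_left hρ
  set t : ℝ := ρ / max ρ ‖PK‖ with ht_def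
  have ht0 : 0 < t := div_pos hρ hmax
  have ht1 : t ≤ 1 := by
    rw [ht_def, div_le_one hmax]; exact le_max_left _ _
  -- variational characterization of the projection onto K
  haveI : Nonempty K := ⟨⟨PK, hPK⟩⟩
  have hbdd : BddBelow (Set.range fun w : K => ‖C - w‖) := by
    refine ⟨0, ?_⟩
    rintro x ⟨w, rfl⟩
    exact norm_nonneg _
  have hmin : ‖C - PK‖ = ⨅ w : K, ‖C - w‖ := by
    apply le_antisymm
    · refine le_ciInf fun w => ?_
      simpa [norm_sub_rev] using hPKproj w.1 w.2
    · exact ciInf_le hbdd ⟨PK, hPK⟩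
  have hvar : ∀ w ∈ K, ⟪C - PK, w - PK⟫ ≤ 0 :=
    (norm_eq_iInf_iff_real_inner_le_zero hKconvex hPK).mp hmin
  have hPK0 : ⟪C - PK, PK⟫ = (0:ℝ) := by
    have h1 := hvar ((2:ℝ) • PK) (hKcone 2 (by norm_num) PK hPK)
    have h2 := hvar 0 h0K
    have e1 : (2:ℝ) • PK - PK = PK := by
      rw [two_smul]; abel
    rw [e1] at h1
    rw [zero_sub, inner_neg_right] at h2
    linarith
  have hinK : ∀ y ∈ K, ⟪C - PK, y⟫ ≤ (0:ℝ) := by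
    intro y hy
    have := hvar y hy
    rw [inner_sub_right] at this
    linarith
  have hPmem : P ∈ K := hKcone t ht0.le PK hPK
  have hPnorm : ‖P‖ ≤ ρ := by
    have hPn : ‖P‖ = t * ‖PK‖ := by
      rw [show P = t • PK from rfl, norm_smul, Real.norm_eq_abs, abs_of_pos ht0]
    rw [hPn, ht_def, div_mul_eq_mul_div, div_le_iff₀ hmax]
    have : ‖PK‖ ≤ max ρ ‖PK‖ := le_max_right _ _
    nlinarith
  refine ⟨⟨hPmem, hPnorm⟩, ?_⟩
  intro y hy hyρ
  have hcross : ⟪PK, PK - C⟫ = (0:ℝ) := by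
    have h := hPK0
    rw [inner_sub_left] at h
    rw [inner_sub_right]
    have hc := real_inner_comm PK C
    linarith
  have hP_expand : ‖P - C‖ ^ 2 = (1 - t) ^ 2 * ‖PK‖ ^ 2 + ‖PK - C‖ ^ 2 := by
    have e : P - C = (t - 1) • PK + (PK - C) := by
      show t • PK - C = _
      rw [sub_smul, one_smul]; abel
    rw [e, norm_add_sq_real, real_inner_smul_left, hcross, norm_smul,
      Real.norm_eq_abs, mul_pow, sq_abs]
    ring
  have hy_expand : ‖y - C‖ ^ 2 = ‖y - PK‖ ^ 2 + 2 * ⟪y - PK, PK - C⟫ + ‖PK - C‖ ^ 2 := by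
    have e : y - C = (y - PK) + (PK - C) := by abel
    rw [e, norm_add_sq_real]
  have hcross2 : (0:ℝ) ≤ ⟪y - PK, PK - C⟫ := by
    have h := hvar y hy
    have e : ⟪y - PK, PK - C⟫ = -(⟪C - PK, y - PK⟫ : ℝ) := by
      rw [real_inner_comm, show PK - C = -(C - PK) from (neg_sub C PK).symm,
        inner_neg_left]
    rw [e]; linarith
  have hdist : (1 - t) * ‖PK‖ ≤ ‖y - PK‖ := by
    rcases le_or_gt ‖PK‖ ρ with h | h
    · have ht : t = 1 := by rw [ht_def, max_eq_left h, div_self hρ.ne']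
      nlinarith [norm_nonneg (y - PK), ht]
    · have hmx : max ρ ‖PK‖ = ‖PK‖ := max_eq_right h.le
      have e : (1 - t) * ‖PK‖ = ‖PK‖ - ρ := by
        have hne : ‖PK‖ ≠ 0 := (hρ.trans h).ne'
        rw [ht_def, hmx, sub_mul, one_mul, div_mul_cancel₀ _ hne]
      rw [e]
      calc ‖PK‖ - ρ ≤ ‖PK‖ - ‖y‖ := by linarith
        _ ≤ ‖PK - y‖ := by
            have := norm_sub_norm_le PK y
            linarith
        _ = ‖y - PK‖ := norm_sub_rev _ _
  have hsq : ‖P - C‖ ^ 2 ≤ ‖y - C‖ ^ 2 := by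
    have h1 : ((1 - t) * ‖PK‖) ^ 2 ≤ ‖y - PK‖ ^ 2 := by
      have hnn : 0 ≤ (1 - t) * ‖PK‖ := mul_nonneg (by linarith) (norm_nonneg _)
      nlinarith
    rw [hP_expand, hy_expand]
    nlinarith
  calc ‖P - C‖ = Real.sqrt (‖P - C‖ ^ 2) := (Real.sqrt_sq (norm_nonneg _)).symm
    _ ≤ Real.sqrt (‖y - C‖ ^ 2) := Real.sqrt_le_sqrt hsq
    _ = ‖y - C‖ := Real.sqrt_sq (norm_nonneg _)
end
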